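/- arXiv:1402.5314 — 2 statements merged into one kernel-verified Lean document; each statement's English description precedes it below -/
import Mathlib

section
/- In the group Ñ_{3,2}, the element g = z_{21} z_{31} z_{32} has palindromic length exactly 4 with respect to the generating family Y = (y_1, y_2, y_3); that is, g is a product of 4 palindromes but not a product of 3 palindromes. -/
/-- The element of `G` represented by a word in the alphabet `X^{±1}`:
a letter `(i, true)` stands for `X i` and `(i, false)` for `(X i)⁻¹`. -/
def evalWord {G : Type*} {n : ℕ} [Group G] (X : Fin n → G) (w : List (Fin n × Bool)) : G :=
  (w.map fun l => if l.2 then X l.1 else (X l.1)⁻¹).prod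

/-- `g` is a palindrome with respect to the generating family `X` if it is represented by
some word whose sequence of letters equals its reverse. -/
def IsPalindrome {G : Type*} {n : ℕ} [Group G] (X : Fin n → G) (g : G) : Prop :=
  ∃ w : List (Fin n × Bool), w.reverse = w ∧ evalWord X w = g

/-- `g` is a product of `k` palindromes with respect to `X`. -/
def IsPalProd {G : Type*} {n : ℕ} [Group G] (X : Fin n → G) (k : ℕ) (g : G) : Prop :=
  ∃ f : Fin k → G, (∀ i, IsPalindrome X (f i)) ∧ (List.ofFn f).prod = g

/-- The palindromic length of `g` with respect to `X`, valued in `ℕ∞`. -/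
noncomputable def palLength {G : Type*} {n : ℕ} [Group G] (X : Fin n → G) (g : G) : ℕ∞ :=
  sInf {k : ℕ∞ | ∃ m : ℕ, k = (m : ℕ∞) ∧ IsPalProd X m g}

/-- The palindromic width of `G` with respect to `X`, valued in `ℕ∞`. -/
noncomputable def palWidth {G : Type*} {n : ℕ} [Group G] (X : Fin n → G) : ℕ∞ :=
  ⨆ g : G, palLength X g

/-- The free nilpotent group `N_{n,r}` of rank `n` and step `r`: the quotient of the free
group on `n` generators by `γ_{r+1} = lowerCentralSeries _ r` (indices: `γ_1` is the
whole group and corresponds to index `0`). -/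
abbrev FreeNilpotent (n r : ℕ) :=
  FreeGroup (Fin n) ⧸ Subgroup.lowerCentralSeries (⊤ : Subgroup (FreeGroup (Fin n))) r

/-- The images `x_1, …, x_n` of the free basis in `N_{n,r}`. -/
def nilGen (n r : ℕ) (i : Fin n) : FreeNilpotent n r :=
  QuotientGroup.mk (FreeGroup.of i)

/-- `Ñ_{n,r}`: the quotient of `N_{n,r}` by the normal closure of the squares of the
generators. -/
abbrev TildeNil (n r : ℕ) :=
  FreeNilpotent n r ⧸ Subgroup.normalClosure (Set.range fun i : Fin n => nilGen n r i ^ 2)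

/-- The generating family `y_1, …, y_n` of `Ñ_{n,r}`. -/
def tnGen (n r : ℕ) (i : Fin n) : TildeNil n r := QuotientGroup.mk (nilGen n r i)

/-- The commutator convention of the paper: `[a, b] = a⁻¹ b⁻¹ a b`. -/
def pcomm {G : Type*} [Group G] (a b : G) : G := a⁻¹ * b⁻¹ * a * b

/-!
Since the `yᵢ` are involutions and commutators are central, `(y₁y₂y₃)² = z₂₁z₃₁z₃₂`, which
splits as the four palindromes `y₁ · y₂ · y₃y₁y₃ · y₃y₂y₃`.

Conversely, a palindrome in involutions is trivial or a conjugate of a generator. If three such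
elements multiply to `z₂₁z₃₁z₃₂`, their images in the abelianization `(ℤ/2)³` force them all to be
trivial or conjugate to one and the same `yᵢ`. Killing `yᵢ` maps `Ñ_{3,2}` to the dihedral group
of order 8 so that the three palindromes go to `1` while `z₂₁z₃₁z₃₂` does not.
-/

open scoped commutatorElement

namespace Subgroup

variable {G H : Type*} [Group G] [Group H]

theorem lowerCentralSeries_quotient_eq_bot {r : ℕ} {N : Subgroup G} [N.Normal]
    (h : (⊤ : Subgroup G).lowerCentralSeries r ≤ N) :
    (⊤ : Subgroup (G ⧸ N)).lowerCentralSeries r = ⊥ := by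
  rw [← map_top_of_surjective _ (QuotientGroup.mk'_surjective N), ← map_lowerCentralSeries,
    Subgroup.map_eq_bot_iff, QuotientGroup.ker_mk']
  exact h

theorem lowerCentralSeries_le_ker {r : ℕ} (f : G →* H)
    (hH : (⊤ : Subgroup H).lowerCentralSeries r = ⊥) :
    (⊤ : Subgroup G).lowerCentralSeries r ≤ f.ker := by
  rw [← Subgroup.map_eq_bot_iff, map_lowerCentralSeries, eq_bot_iff, ← hH]
  exact lowerCentralSeries_mono r le_top

theorem lowerCentralSeries_two_eq_bot_iff :
    (⊤ : Subgroup G).lowerCentralSeries 2 = ⊥ ↔ ∀ a b : G, ⁅a, b⁆ ∈ center G := by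
  constructor
  · intro h a b
    refine mem_center_iff.mpr fun c => ?_
    have hmem : ⁅⁅a, b⁆, c⁆ ∈ (⊤ : Subgroup G).lowerCentralSeries 2 :=
      commutator_mem_commutator (commutator_mem_commutator (mem_top a) (mem_top b)) (mem_top c)
    rw [h, mem_bot, commutatorElement_eq_one_iff_commute] at hmem
    exact hmem.eq.symm
  · intro h
    refine lowerCentralSeries_succ_eq_bot ⊤ ?_
    rw [top_lowerCentralSeries_one, _root_.commutator_def, commutator_le]
    exact fun a _ b _ => h a b

end Subgroup

section ClassTwo

variable {G : Type*} [Group G]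

theorem pcomm_mem_center (h : (⊤ : Subgroup G).lowerCentralSeries 2 = ⊥) (a b : G) :
    pcomm a b ∈ Subgroup.center G := by
  have : pcomm a b = ⁅a⁻¹, b⁻¹⁆ := by simp [pcomm, commutatorElement_def]
  exact this ▸ Subgroup.lowerCentralSeries_two_eq_bot_iff.mp h _ _

theorem mul_eq_mul_mul_pcomm (a b : G) : a * b = b * a * pcomm a b := by
  simp only [pcomm]; group

theorem mul_self_eq_pcomm_mul_pcomm_mul_pcomm (h : (⊤ : Subgroup G).lowerCentralSeries 2 = ⊥)
    {a b c : G} (ha : a * a = 1) (hb : b * b = 1) (hc : c * c = 1) :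
    a * b * c * (a * b * c) = pcomm b a * pcomm c a * pcomm c b := by
  have hcentral : ∀ x y w : G, pcomm x y * w = w * pcomm x y := fun x y w =>
    (Subgroup.mem_center_iff.mp (pcomm_mem_center h x y) w).symm
  have hmove : ∀ x y u v : G, u * pcomm x y * v = u * v * pcomm x y := fun x y u v => by
    rw [mul_assoc, hcentral, ← mul_assoc]
  -- Swap `c a`, `b a`, `c b` in turn; each swap emits a central `pcomm`, pushed to the right.
  calc a * b * c * (a * b * c)
      = a * b * (c * a) * (b * c) := by group
    _ = a * b * a * c * b * c * pcomm c a := by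
        rw [mul_eq_mul_mul_pcomm c a, ← mul_assoc (a * b), hmove]; group
    _ = a * a * b * c * b * c * pcomm b a * pcomm c a := by
        rw [mul_assoc a b, mul_eq_mul_mul_pcomm b a, ← mul_assoc a, ← mul_assoc a, hmove b a,
          hmove b a, hmove b a]
    _ = a * a * b * b * c * c * pcomm c b * pcomm b a * pcomm c a := by
        rw [mul_assoc (a * a * b) c, mul_eq_mul_mul_pcomm c b, ← mul_assoc (a * a * b),
          ← mul_assoc (a * a * b), hmove c b]
    _ = pcomm b a * pcomm c a * pcomm c b := by
        rw [ha, one_mul, hb, one_mul, hc, one_mul, mul_assoc, hcentral]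

end ClassTwo

section Palindromes

variable {G : Type*} [Group G] {n : ℕ} {X : Fin n → G}

theorem isPalindrome_one (X : Fin n → G) : IsPalindrome X 1 := ⟨[], rfl, rfl⟩

theorem isPalindrome_gen (X : Fin n → G) (i : Fin n) : IsPalindrome X (X i) :=
  ⟨[(i, true)], rfl, by simp [evalWord]⟩

theorem IsPalindrome.gen_mul_mul_gen {g : G} (hg : IsPalindrome X g) (i : Fin n) :
    IsPalindrome X (X i * g * X i) := by
  obtain ⟨w, hw, rfl⟩ := hg
  exact ⟨(i, true) :: w ++ [(i, true)], by simp [hw], by simp [evalWord, mul_assoc]⟩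

/-- When the generators are involutions, an even palindrome `u ũ` is trivial and an odd one
`u x ũ` is the conjugate `u x u⁻¹`. -/
theorem IsPalindrome.exists_isConj (hX : ∀ i, X i * X i = 1) {g : G} (hg : IsPalindrome X g) :
    ∃ s : Option (Fin n), IsConj (s.elim 1 X) g := by
  obtain ⟨w, hw, rfl⟩ := hg
  have hletter (l : Fin n × Bool) : (if l.2 then X l.1 else (X l.1)⁻¹) = X l.1 := by
    cases l.2 <;> simp [inv_eq_of_mul_eq_one_right (hX l.1)]
  have hpal := List.Palindrome.of_reverse_eq hw
  clear hw
  induction hpal with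
  | nil => exact ⟨none, by simp [evalWord]⟩
  | singleton l => exact ⟨some l.1, by simpa [evalWord, hletter] using IsConj.refl (X l.1)⟩
  | cons_concat l _ ih =>
    obtain ⟨s, hs⟩ := ih
    refine ⟨s, hs.trans (isConj_iff.mpr ⟨X l.1, ?_⟩)⟩
    simp [evalWord, hletter, inv_eq_of_mul_eq_one_right (hX l.1), mul_assoc]

theorem IsPalProd.mono {g : G} {m k : ℕ} (h : IsPalProd X m g) (hmk : m ≤ k) :
    IsPalProd X k g := by
  induction k, hmk using Nat.le_induction with
  | base => exact h
  | succ k _ ih =>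
    obtain ⟨f, hf, rfl⟩ := ih
    exact ⟨Fin.cons 1 f, Fin.cases (isPalindrome_one X) hf, by simp⟩

theorem palLength_eq_of_isPalProd_of_not {g : G} {k : ℕ} (hk : IsPalProd X (k + 1) g)
    (hlt : ¬ IsPalProd X k g) : palLength X g = k + 1 := by
  refine le_antisymm (sInf_le ⟨k + 1, by simp, hk⟩) (le_sInf ?_)
  rintro _ ⟨m, rfl, hm⟩
  by_contra! hmk
  exact hlt (hm.mono (Nat.lt_succ_iff.mp (by exact_mod_cast hmk)))

end Palindromes

theorem isPalProd_four_pcomm {G : Type*} [Group G]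
    (h : (⊤ : Subgroup G).lowerCentralSeries 2 = ⊥) {X : Fin 3 → G} (hX : ∀ i, X i * X i = 1) :
    IsPalProd X 4 (pcomm (X 1) (X 0) * pcomm (X 2) (X 0) * pcomm (X 2) (X 1)) := by
  refine ⟨![X 0, X 1, X 2 * X 0 * X 2, X 2 * X 1 * X 2], ?_, ?_⟩
  · intro i
    fin_cases i
    exacts [isPalindrome_gen X 0, isPalindrome_gen X 1,
      (isPalindrome_gen X 0).gen_mul_mul_gen 2, (isPalindrome_gen X 1).gen_mul_mul_gen 2]
  · rw [← mul_self_eq_pcomm_mul_pcomm_mul_pcomm h (hX 0) (hX 1) (hX 2)]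
    calc (List.ofFn ![X 0, X 1, X 2 * X 0 * X 2, X 2 * X 1 * X 2]).prod
        = X 0 * X 1 * X 2 * X 0 * (X 2 * X 2) * X 1 * X 2 := by simp [List.ofFn_succ]; group
      _ = X 0 * X 1 * X 2 * (X 0 * X 1 * X 2) := by rw [hX 2]; group

namespace TildeNil

variable {n r : ℕ} {H : Type*} [Group H]

theorem lowerCentralSeries_eq_bot : (⊤ : Subgroup (TildeNil n r)).lowerCentralSeries r = ⊥ :=
  Subgroup.lowerCentralSeries_quotient_eq_bot
    ((Subgroup.lowerCentralSeries_quotient_eq_bot le_rfl).trans_le bot_le)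

theorem gen_mul_self (i : Fin n) : tnGen n r i * tnGen n r i = 1 := by
  rw [← pow_two, tnGen, ← QuotientGroup.mk_pow, QuotientGroup.eq_one_iff]
  exact Subgroup.subset_normalClosure ⟨i, rfl⟩

def lift (hH : (⊤ : Subgroup H).lowerCentralSeries r = ⊥) (Y : Fin n → H)
    (hY : ∀ i, Y i * Y i = 1) : TildeNil n r →* H :=
  QuotientGroup.lift _
    (QuotientGroup.lift _ (FreeGroup.lift Y) (Subgroup.lowerCentralSeries_le_ker _ hH))
    (Subgroup.normalClosure_le_normal <| by
      rintro _ ⟨i, rfl⟩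
      simp [nilGen, pow_two, hY])

@[simp]
theorem lift_tnGen (hH : (⊤ : Subgroup H).lowerCentralSeries r = ⊥) (Y : Fin n → H)
    (hY : ∀ i, Y i * Y i = 1) (i : Fin n) : lift hH Y hY (tnGen n r i) = Y i :=
  FreeGroup.lift_apply_of

theorem lift_comp_tnGen (hH : (⊤ : Subgroup H).lowerCentralSeries r = ⊥) (Y : Fin n → H)
    (hY : ∀ i, Y i * Y i = 1) : lift hH Y hY ∘ tnGen n r = Y :=
  funext (lift_tnGen hH Y hY)

end TildeNil

theorem map_pcomm {G H : Type*} [Group G] [Group H] (φ : G →* H) (a b : G) :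
    φ (pcomm a b) = pcomm (φ a) (φ b) := by
  simp [pcomm]

theorem MonoidHom.map_optionElim {G H ι : Type*} [Group G] [Group H] (φ : G →* H)
    (s : Option ι) (X : ι → G) : φ (s.elim 1 X) = s.elim 1 (φ ∘ X) := by
  cases s <;> simp

def parityGen (n : ℕ) (i : Fin n) : Multiplicative (Fin n → ZMod 2) :=
  Multiplicative.ofAdd (Pi.single i 1)

def TildeNil.parity (n : ℕ) : TildeNil n 2 →* Multiplicative (Fin n → ZMod 2) :=
  TildeNil.lift (Subgroup.lowerCentralSeries_two_eq_bot_iff.mpr fun a b => by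
      simp [CommGroup.center_eq_top]) (parityGen n) fun i => by
    simp only [parityGen, ← ofAdd_add, ← Pi.single_add, CharTwo.add_self_eq_zero, Pi.single_zero,
      ofAdd_zero]

def dihedralGen : Fin 3 → Fin 3 → DihedralGroup 4 :=
  ![![1, .sr 0, .sr 1], ![.sr 0, 1, .sr 1], ![.sr 0, .sr 1, 1]]

theorem dihedralGroup_four_lowerCentralSeries_two_eq_bot :
    (⊤ : Subgroup (DihedralGroup 4)).lowerCentralSeries 2 = ⊥ :=
  Subgroup.lowerCentralSeries_two_eq_bot_iff.mpr fun a b =>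
    Subgroup.mem_center_iff.mpr fun g => by revert a b g; decide

theorem dihedralGen_mul_self : ∀ i j, dihedralGen i j * dihedralGen i j = 1 := by decide

/-- Kills `y i` and sends the other two generators to reflections of the square whose product is
a quarter turn, so that their commutator survives. -/
def toDihedral (i : Fin 3) : TildeNil 3 2 →* DihedralGroup 4 :=
  TildeNil.lift dihedralGroup_four_lowerCentralSeries_two_eq_bot (dihedralGen i)
    (dihedralGen_mul_self i)

theorem exists_forall_mem_eq_of_parity : ∀ s t u : Option (Fin 3),
    s.elim 1 (parityGen 3) * t.elim 1 (parityGen 3) * u.elim 1 (parityGen 3) = 1 →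
      ∃ i, (∀ j ∈ s, j = i) ∧ (∀ j ∈ t, j = i) ∧ (∀ j ∈ u, j = i) := by
  decide

theorem toDihedral_z21z31z32_ne_one (i : Fin 3) :
    toDihedral i (pcomm (tnGen 3 2 1) (tnGen 3 2 0) * pcomm (tnGen 3 2 2) (tnGen 3 2 0) *
      pcomm (tnGen 3 2 2) (tnGen 3 2 1)) ≠ 1 := by
  simp only [map_mul, map_pcomm, toDihedral, TildeNil.lift_tnGen]
  revert i; decide

theorem toDihedral_optionElim {i : Fin 3} {s : Option (Fin 3)} (hs : ∀ j ∈ s, j = i) :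
    toDihedral i (s.elim 1 (tnGen 3 2)) = 1 := by
  rw [MonoidHom.map_optionElim, toDihedral, TildeNil.lift_comp_tnGen]
  rcases s with _ | j
  · rfl
  · obtain rfl := hs j rfl
    revert j; decide

theorem not_isPalProd_three_z21z31z32 :
    ¬ IsPalProd (tnGen 3 2) 3 (pcomm (tnGen 3 2 1) (tnGen 3 2 0) *
      pcomm (tnGen 3 2 2) (tnGen 3 2 0) * pcomm (tnGen 3 2 2) (tnGen 3 2 1)) := by
  rintro ⟨f, hf, hprod⟩
  choose s hs using fun j => (hf j).exists_isConj TildeNil.gen_mul_self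
  simp only [List.ofFn_succ, List.ofFn_zero, List.prod_cons, List.prod_nil, mul_one,
    Fin.succ_zero_eq_one, Fin.succ_one_eq_two] at hprod
  have hparity (j : Fin 3) : TildeNil.parity 3 (f j) = (s j).elim 1 (parityGen 3) := by
    rw [← isConj_iff_eq.mp ((TildeNil.parity 3).map_isConj (hs j)), MonoidHom.map_optionElim,
      TildeNil.parity, TildeNil.lift_comp_tnGen]
  obtain ⟨i, h0, h1, h2⟩ := exists_forall_mem_eq_of_parity (s 0) (s 1) (s 2) <| by
    rw [← hparity, ← hparity, ← hparity, mul_assoc, ← map_mul, ← map_mul, hprod]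
    simp [pcomm]
  have hkill (j : Fin 3) (hj : ∀ k ∈ s j, k = i) : toDihedral i (f j) = 1 :=
    isConj_one_right.mp (toDihedral_optionElim hj ▸ (toDihedral i).map_isConj (hs j))
  apply toDihedral_z21z31z32_ne_one i
  rw [← hprod, map_mul, map_mul, hkill 0 h0, hkill 1 h1, hkill 2 h2, one_mul, one_mul]

/-- In `Ñ_{3,2}`, the element `z₂₁ z₃₁ z₃₂` has palindromic length exactly 4:
it is a product of 4 palindromes but not a product of 3 palindromes. -/
theorem palLength_z21z31z32 :
    IsPalProd (tnGen 3 2) 4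
        (pcomm (tnGen 3 2 1) (tnGen 3 2 0) * pcomm (tnGen 3 2 2) (tnGen 3 2 0) *
          pcomm (tnGen 3 2 2) (tnGen 3 2 1)) ∧
      ¬ IsPalProd (tnGen 3 2) 3
        (pcomm (tnGen 3 2 1) (tnGen 3 2 0) * pcomm (tnGen 3 2 2) (tnGen 3 2 0) *
          pcomm (tnGen 3 2 2) (tnGen 3 2 1)) ∧
      palLength (tnGen 3 2)
        (pcomm (tnGen 3 2 1) (tnGen 3 2 0) * pcomm (tnGen 3 2 2) (tnGen 3 2 0) *
          pcomm (tnGen 3 2 2) (tnGen 3 2 1)) = 4 := by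
  have hfour := isPalProd_four_pcomm TildeNil.lowerCentralSeries_eq_bot TildeNil.gen_mul_self
  exact ⟨hfour, not_isPalProd_three_z21z31z32,
    palLength_eq_of_isPalProd_of_not hfour not_isPalProd_three_z21z31z32⟩
end

section
/- Let n ≥ 2 and let N_{n,2} be the free nilpotent group of rank n and step 2 with generating family X = (x_1, …, x_n). Every palindrome p ∈ N_{n,2} (with respect to X) can be written in the form p = x_1^{α_1} ⋯ x_{i-1}^{α_{i-1}} x_{i+1}^{α_{i+1}} ⋯ x_n^{α_n} · x_i^{α_0} · x_n^{α_n} ⋯ x_{i+1}^{α_{i+1}} x_{i-1}^{α_{i-1}} ⋯ x_1^{α_1} for some index i with 1 ≤ i ≤ n and some integers α_0, α_1, …, α_n. -/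
/-!
If all commutators are central, then `g * (a * m * a) * g = a * (g * m * g) * a`: the
palindromic conjugations `m ↦ g * m * g` commute with each other, and those by powers of one
generator compose by adding exponents. A palindromic word `l₁ ⋯ lₖ c lₖ ⋯ l₁` with centre `c`
empty or a single letter `x_i^{±1}` is the result of the conjugations by `l₁, …, lₖ` applied to
`c`; sorting them by generator, merging equal generators and absorbing those by `x_i` into the
centre gives the normal form.
-/

open scoped commutatorElement

theorem commutatorElement_mem_center_quotient_lowerCentralSeries_two {G : Type*} [Group G]
    (a b : G ⧸ (⊤ : Subgroup G).lowerCentralSeries 2) : ⁅a, b⁆ ∈ Subgroup.center _ := by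
  refine Subgroup.mem_center_iff.mpr fun c => ?_
  induction a using QuotientGroup.induction_on with | H a =>
  induction b using QuotientGroup.induction_on with | H b =>
  induction c using QuotientGroup.induction_on with | H c =>
  have h : ⁅⁅a, b⁆, c⁆ ∈ (⊤ : Subgroup G).lowerCentralSeries 2 := by
    rw [Subgroup.lowerCentralSeries_succ, Subgroup.top_lowerCentralSeries_one]
    exact Subgroup.commutator_mem_commutator
      (Subgroup.commutator_mem_commutator (Subgroup.mem_top a) (Subgroup.mem_top b))
      (Subgroup.mem_top c)
  have h' : QuotientGroup.mk' _ ⁅⁅a, b⁆, c⁆ = 1 := (QuotientGroup.eq_one_iff _).mpr h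
  rw [map_commutatorElement, map_commutatorElement] at h'
  exact (commutatorElement_eq_one_iff_mul_comm.mp h').symm

section CentralCommutators

variable {G : Type*} [Group G]

def sandwich (L : List G) (m : G) : G := L.prod * m * L.reverse.prod

@[simp]
theorem sandwich_nil (m : G) : sandwich [] m = m := by simp [sandwich]

@[simp]
theorem sandwich_cons (a : G) (L : List G) (m : G) :
    sandwich (a :: L) m = a * sandwich L m * a := by
  simp [sandwich, mul_assoc]

variable (hG : ∀ a b : G, ⁅a, b⁆ ∈ Subgroup.center G)
include hG

theorem mul_sandwich_mul (g : G) (L : List G) (m : G) :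
    g * sandwich L m * g = sandwich L (g * m * g) := by
  induction L generalizing m with
  | nil => simp
  | cons a L ih =>
    have hc := Subgroup.mem_center_iff.mp (hG g a)
    calc g * sandwich (a :: L) m * g
        = ⁅g, a⁆ * (a * g * sandwich L m) * (a * g) := by rw [sandwich_cons]; group
      _ = a * g * sandwich L m * ⁅g, a⁆ * (a * g) := by rw [← hc]
      _ = a * (g * sandwich L m * g) * a := by group
      _ = sandwich (a :: L) (g * m * g) := by rw [ih, sandwich_cons]

theorem zpow_mul_sandwich_mul_zpow_of_mem {ι : Type*} [DecidableEq ι] (X : ι → G)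
    {ℓ : List ι} (hℓ : ℓ.Nodup) {k : ι} (hk : k ∈ ℓ) (α : ι → ℤ) (e : ℤ) (m : G) :
    X k ^ e * sandwich (ℓ.map fun j => X j ^ α j) m * X k ^ e
      = sandwich (ℓ.map fun j => X j ^ Function.update α k (α k + e) j) m := by
  induction ℓ with
  | nil => simp at hk
  | cons j ℓ ih =>
    obtain ⟨hjℓ, hℓ⟩ := List.nodup_cons.mp hℓ
    by_cases hkj : k = j
    · subst hkj
      have hrest : (ℓ.map fun j => X j ^ Function.update α k (α k + e) j)
          = ℓ.map fun j => X j ^ α j :=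
        List.map_congr_left fun j hj => by
          rw [Function.update_of_ne (ne_of_mem_of_not_mem hj hjℓ)]
      simp only [List.map_cons, sandwich_cons, hrest, Function.update_self]
      group
    · have hkℓ : k ∈ ℓ := (List.mem_cons.mp hk).resolve_left hkj
      calc X k ^ e * sandwich ((j :: ℓ).map fun j => X j ^ α j) m * X k ^ e
          = X j ^ α j * (X k ^ e * sandwich (ℓ.map fun j => X j ^ α j) m * X k ^ e) * X j ^ α j :=
            by simpa using mul_sandwich_mul hG (X k ^ e) [X j ^ α j] _
        _ = _ := by rw [ih hℓ hkℓ]; simp [Function.update_of_ne (Ne.symm hkj)]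

def palindromicNormalForm {n : ℕ} (X : Fin n → G) (i : Fin n) (α₀ : ℤ) (α : Fin n → ℤ) : G :=
  sandwich (((List.finRange n).filter fun j => j ≠ i).map fun j => X j ^ α j) (X i ^ α₀)

theorem exists_zpow_mul_palindromicNormalForm_mul_zpow {n : ℕ} (X : Fin n → G)
    (i k : Fin n) (α₀ e : ℤ) (α : Fin n → ℤ) :
    ∃ (β₀ : ℤ) (β : Fin n → ℤ),
      X k ^ e * palindromicNormalForm X i α₀ α * X k ^ e = palindromicNormalForm X i β₀ β := by
  by_cases hki : k = i
  · subst hki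
    refine ⟨α₀ + 2 * e, α, ?_⟩
    rw [palindromicNormalForm, mul_sandwich_mul hG, palindromicNormalForm]
    group
  · refine ⟨α₀, Function.update α k (α k + e), zpow_mul_sandwich_mul_zpow_of_mem hG X
      ((List.nodup_finRange n).filter _) (List.mem_filter.mpr ⟨List.mem_finRange k, by simpa⟩)
      α e _⟩

end CentralCommutators

section Words

variable {G : Type*} [Group G] {n : ℕ} (X : Fin n → G)

theorem evalWord_singleton (l : Fin n × Bool) :
    evalWord X [l] = X l.1 ^ (if l.2 then 1 else -1 : ℤ) := by
  obtain ⟨k, _ | _⟩ := l <;> simp [evalWord]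

theorem evalWord_cons_append_singleton (l : Fin n × Bool) (w : List (Fin n × Bool)) :
    evalWord X (l :: (w ++ [l])) = evalWord X [l] * evalWord X w * evalWord X [l] := by
  simp [evalWord, mul_assoc]

end Words

theorem IsPalindrome.exists_eq_palindromicNormalForm {G : Type*} [Group G]
    (hG : ∀ a b : G, ⁅a, b⁆ ∈ Subgroup.center G) {n : ℕ} [NeZero n] {X : Fin n → G} {p : G}
    (hp : IsPalindrome X p) :
    ∃ (i : Fin n) (α₀ : ℤ) (α : Fin n → ℤ), p = palindromicNormalForm X i α₀ α := by
  obtain ⟨w, hw, rfl⟩ := hp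
  replace hw := List.Palindrome.of_reverse_eq hw
  induction hw with
  | nil => exact ⟨0, 0, 0, by simp [palindromicNormalForm, sandwich, evalWord]⟩
  | singleton l =>
    refine ⟨l.1, if l.2 then 1 else -1, 0, ?_⟩
    simp [evalWord_singleton, palindromicNormalForm, sandwich]
  | cons_concat l _ ih =>
    obtain ⟨i, α₀, α, hw⟩ := ih
    obtain ⟨β₀, β, hβ⟩ := exists_zpow_mul_palindromicNormalForm_mul_zpow hG X i l.1 α₀ _ α
    exact ⟨i, β₀, β, by rw [evalWord_cons_append_singleton, hw, evalWord_singleton, hβ]⟩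

/-- Every palindrome `p` in `N_{n,2}` has the form
`x_1^{α_1} ⋯ x_{i-1}^{α_{i-1}} x_{i+1}^{α_{i+1}} ⋯ x_n^{α_n} · x_i^{α_0} ·
 x_n^{α_n} ⋯ x_{i+1}^{α_{i+1}} x_{i-1}^{α_{i-1}} ⋯ x_1^{α_1}`
for some index `i` and integers `α_0, α_1, …, α_n`. -/
theorem palindrome_form_freeNilpotent_two (n : ℕ) (hn : 2 ≤ n) (p : FreeNilpotent n 2)
    (hp : IsPalindrome (nilGen n 2) p) :
    ∃ (i : Fin n) (α₀ : ℤ) (α : Fin n → ℤ),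
      p = ((((List.finRange n).filter fun j => j ≠ i).map fun j => nilGen n 2 j ^ α j).prod)
            * nilGen n 2 i ^ α₀
            * (((((List.finRange n).filter fun j => j ≠ i).reverse).map
                fun j => nilGen n 2 j ^ α j).prod) := by
  have : NeZero n := ⟨by omega⟩
  obtain ⟨i, α₀, α, rfl⟩ := hp.exists_eq_palindromicNormalForm
    commutatorElement_mem_center_quotient_lowerCentralSeries_two
  exact ⟨i, α₀, α, by rw [palindromicNormalForm, sandwich, List.map_reverse]⟩
end
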